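/- Let (a_k)_{k≥1} be a square-summable sequence of complex numbers satisfying the Kolmogorov–Seliverstov–Plessner condition ∑_{k≥2} |a_k|²·log k < ∞. For n ≥ 1 set ξ_n := ∑_{k≥1, k≠2n} a_k²·( 1/(2n+k) + 1/(2n−k) − 1/n ) (an absolutely convergent series). Then ∑_{n=1}^∞ |ξ_n| < ∞. -/
import Mathlib


open Set

/-- Term of the series `ξ_n = ∑_{k≥1, k≠2n} a_k² (1/(2n+k) + 1/(2n−k) − 1/n)`. -/
noncomputable def xiTerm (a : ℕ → ℂ) (n k : ℕ) : ℂ :=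
  if k = 0 ∨ k = 2 * n then 0
  else (a k) ^ 2 * (1 / (2 * (n:ℂ) + k) + 1 / (2 * (n:ℂ) - k) - 1 / (n:ℂ))

/-- `ξ_n = ∑_{k≥1, k≠2n} a_k² (1/(2n+k) + 1/(2n−k) − 1/n)`. -/
noncomputable def xiSeq (a : ℕ → ℂ) (n : ℕ) : ℂ := ∑' k : ℕ, xiTerm a n k

namespace XiAux

/-- Real majorant `k / (n |2n - k|)` for the coefficient in `xiTerm`. -/
noncomputable def dmaj (n k : ℕ) : ℝ :=
  if 2 * n = k then 0 else (k : ℝ) / (n * |2 * (n:ℝ) - k|)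

lemma dmaj_nonneg (n k : ℕ) : 0 ≤ dmaj n k := by
  unfold dmaj
  split
  · exact le_rfl
  · positivity

lemma one_le_abs (n k : ℕ) (h : 2 * n ≠ k) : (1:ℝ) ≤ |2 * (n:ℝ) - k| := by
  have hz : 2 * (n:ℤ) - (k:ℤ) ≠ 0 := by omega
  have h2 : (1:ℤ) ≤ |2 * (n:ℤ) - (k:ℤ)| := Int.one_le_abs hz
  have h1 : 2 * (n:ℝ) - k = ((2 * (n:ℤ) - (k:ℤ) : ℤ) : ℝ) := by push_cast; ring
  rw [h1, ← Int.cast_abs, ← Int.cast_one, Int.cast_le]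
  exact h2

lemma dmaj_le_four (n k : ℕ) (hn : 1 ≤ n) : dmaj n k ≤ 4 := by
  unfold dmaj
  split
  · norm_num
  · rename_i h
    have hA : (1:ℝ) ≤ |2 * (n:ℝ) - k| := one_le_abs n k h
    have hn' : (1:ℝ) ≤ n := by exact_mod_cast hn
    rcases le_or_gt (k : ℕ) (4 * n) with hk | hk
    · -- k ≤ 4n : k/(n A) ≤ 4 since n A ≥ n ≥ k/4
      rw [div_le_iff₀ (by positivity)]
      have hk' : (k:ℝ) ≤ 4 * n := by exact_mod_cast hk
      nlinarith
    · -- k > 4n : |2n - k| = k - 2n ≥ k/2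
      have hk' : (4:ℝ) * n < k := by exact_mod_cast hk
      have habs : |2 * (n:ℝ) - k| = (k:ℝ) - 2 * n := by
        rw [abs_of_nonpos (by linarith)]; ring
      rw [habs, div_le_iff₀ (by nlinarith)]
      nlinarith

lemma norm_xiTerm_le (a : ℕ → ℂ) (n k : ℕ) (hn : 1 ≤ n) :
    ‖xiTerm a n k‖ ≤ ‖a k‖ ^ 2 * dmaj n k := by
  unfold xiTerm
  split
  · rw [norm_zero]
    exact mul_nonneg (by positivity) (dmaj_nonneg _ _)
  · rename_i h
    push_neg at h
    obtain ⟨hk0, hk2n⟩ := h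
    have hk1 : 1 ≤ k := Nat.one_le_iff_ne_zero.mpr hk0
    have h2nk : 2 * n ≠ k := fun hh => hk2n hh.symm
    -- nonvanishing of denominators over ℂ
    have hX : (n:ℂ) ≠ 0 := Nat.cast_ne_zero.mpr (by omega)
    have hP : 2 * (n:ℂ) + k ≠ 0 := by
      have : 2 * (n:ℂ) + k = ((2 * n + k : ℕ) : ℂ) := by push_cast; ring
      rw [this]
      exact Nat.cast_ne_zero.mpr (by omega)
    have hM : 2 * (n:ℂ) - k ≠ 0 := by
      have h1 : 2 * (n:ℂ) - k = (((2 * n : ℤ) - k : ℤ) : ℂ) := by push_cast; ring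
      rw [h1]
      exact Int.cast_ne_zero.mpr (sub_ne_zero.mpr (by exact_mod_cast h2nk))
    have hid : 1 / (2 * (n:ℂ) + k) + 1 / (2 * (n:ℂ) - k) - 1 / (n:ℂ)
        = (k:ℂ)^2 / ((n:ℂ) * (2 * (n:ℂ) + k) * (2 * (n:ℂ) - k)) := by
      field_simp
      ring
    rw [hid, norm_mul, norm_pow]
    have hnormM : ‖2 * (n:ℂ) - k‖ = |2 * (n:ℝ) - k| := by
      have h1 : 2 * (n:ℂ) - k = ((2 * (n:ℝ) - k : ℝ) : ℂ) := by push_cast; ring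
      rw [h1, Complex.norm_real, Real.norm_eq_abs]
    have hnorm : ‖(k:ℂ)^2 / ((n:ℂ) * (2 * (n:ℂ) + k) * (2 * (n:ℂ) - k))‖
        = (k:ℝ)^2 / ((n:ℝ) * (2 * (n:ℝ) + k) * |2 * (n:ℝ) - k|) := by
      rw [norm_div, norm_pow, norm_mul, norm_mul, hnormM]
      have h2 : ‖(k:ℂ)‖ = (k:ℝ) := by simp
      have h3 : ‖(n:ℂ)‖ = (n:ℝ) := by simp
      have h4 : ‖2 * (n:ℂ) + k‖ = 2 * (n:ℝ) + k := by
        have : 2 * (n:ℂ) + k = ((2 * (n:ℝ) + k : ℝ) : ℂ) := by push_cast; ring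
        rw [this, Complex.norm_real, Real.norm_eq_abs, abs_of_nonneg (by positivity)]
      rw [h2, h3, h4]
    rw [hnorm]
    have hdm : dmaj n k = (k:ℝ) / ((n:ℝ) * |2 * (n:ℝ) - k|) := by
      unfold dmaj; rw [if_neg h2nk]
    rw [hdm]
    apply mul_le_mul_of_nonneg_left _ (by positivity)
    have hA : (1:ℝ) ≤ |2 * (n:ℝ) - k| := one_le_abs n k h2nk
    have hn' : (1:ℝ) ≤ n := by exact_mod_cast hn
    have hk' : (1:ℝ) ≤ k := by exact_mod_cast hk1
    have h1 : (0:ℝ) < n := by linarith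
    have h2 : (0:ℝ) < 2 * (n:ℝ) + k := by linarith
    have h3 : (0:ℝ) < |2 * (n:ℝ) - k| := by linarith
    have hpos : (0:ℝ) < (n:ℝ) * (2 * (n:ℝ) + k) * |2 * (n:ℝ) - k| :=
      mul_pos (mul_pos h1 h2) h3
    have hpos2 : (0:ℝ) < (n:ℝ) * |2 * (n:ℝ) - k| := mul_pos h1 h3
    rw [div_le_div_iff₀ hpos hpos2]
    have hkk : (k:ℝ)^2 ≤ (k:ℝ) * (2 * (n:ℝ) + k) := by nlinarith
    calc (k:ℝ)^2 * ((n:ℝ) * |2 * (n:ℝ) - k|)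
        ≤ ((k:ℝ) * (2 * (n:ℝ) + k)) * ((n:ℝ) * |2 * (n:ℝ) - k|) :=
          mul_le_mul_of_nonneg_right hkk (le_of_lt hpos2)
      _ = (k:ℝ) * ((n:ℝ) * (2 * (n:ℝ) + k) * |2 * (n:ℝ) - k|) := by ring

/-- Helper: sums of `1/(g m)` over injectively indexed subsets of `[1,k]`
are bounded by the harmonic number. -/
lemma sum_inv_le (k : ℕ) (S : Finset ℕ) (g : ℕ → ℕ)
    (hinj : ∀ x ∈ S, ∀ y ∈ S, g x = g y → x = y)
    (hg : ∀ m ∈ S, g m ∈ Finset.Icc 1 k) :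
    ∑ m ∈ S, ((g m : ℝ))⁻¹ ≤ ((harmonic k : ℚ) : ℝ) := by
  have hsub : S.image g ⊆ Finset.Icc 1 k := by
    intro j hj
    obtain ⟨m, hm, rfl⟩ := Finset.mem_image.mp hj
    exact hg m hm
  calc ∑ m ∈ S, ((g m : ℝ))⁻¹
      = ∑ j ∈ S.image g, ((j:ℝ))⁻¹ :=
        (Finset.sum_image (f := fun j : ℕ => ((j:ℝ))⁻¹) (g := g) (s := S) hinj).symm
    _ ≤ ∑ j ∈ Finset.Icc 1 k, ((j:ℝ))⁻¹ :=
        Finset.sum_le_sum_of_subset_of_nonneg hsub (fun j _ _ => by positivity)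
    _ = ((harmonic k : ℚ) : ℝ) := by
        rw [harmonic_eq_sum_Icc]
        push_cast
        ring

lemma sum_dmaj_le (k N : ℕ) :
    ∑ n ∈ Finset.range N, dmaj (n+1) k ≤ 6 * (1 + Real.log k) := by
  rcases Nat.eq_zero_or_pos k with rfl | hk
  · have : ∀ n ∈ Finset.range N, dmaj (n+1) 0 = 0 := by
      intro n _
      unfold dmaj
      rw [if_neg (by omega)]
      simp
    rw [Finset.sum_congr rfl this]
    simp
  -- k ≥ 1
  have hlog : 0 ≤ Real.log k := Real.log_natCast_nonneg k
  set H : ℝ := ((harmonic k : ℚ) : ℝ) with hH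
  have hHle : H ≤ 1 + Real.log k := harmonic_le_one_add_log k
  -- reindex to Ico 1 (N+1)
  have hre : ∑ n ∈ Finset.range N, dmaj (n+1) k = ∑ m ∈ Finset.Ico 1 (N+1), dmaj m k := by
    rw [Finset.sum_Ico_eq_sum_range]
    simp only [Nat.add_sub_cancel]
    exact Finset.sum_congr rfl fun i _ => by rw [Nat.add_comm]
  rw [hre]
  set S := Finset.Ico 1 (N+1) with hS
  -- split into four regions
  rw [← Finset.sum_filter_add_sum_filter_not S (fun m => 2*m < k),
      ← Finset.sum_filter_add_sum_filter_not (S.filter (fun m => ¬ 2*m < k)) (fun m => 2*m = k),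
      ← Finset.sum_filter_add_sum_filter_not
        ((S.filter (fun m => ¬ 2*m < k)).filter (fun m => ¬ 2*m = k)) (fun m => m ≤ k)]
  set A := S.filter (fun m => 2*m < k) with hA
  set Beq := (S.filter (fun m => ¬ 2*m < k)).filter (fun m => 2*m = k) with hBeq
  set B1 := ((S.filter (fun m => ¬ 2*m < k)).filter (fun m => ¬ 2*m = k)).filter
      (fun m => m ≤ k) with hB1
  set C := ((S.filter (fun m => ¬ 2*m < k)).filter (fun m => ¬ 2*m = k)).filter
      (fun m => ¬ m ≤ k) with hC
  have memA : ∀ m ∈ A, 1 ≤ m ∧ 2*m < k := by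
    intro m hm
    simp only [hA, hS, Finset.mem_filter, Finset.mem_Ico] at hm
    omega
  have memB1 : ∀ m ∈ B1, 1 ≤ m ∧ k < 2*m ∧ m ≤ k := by
    intro m hm
    simp only [hB1, hS, Finset.mem_filter, Finset.mem_Ico] at hm
    omega
  have memC : ∀ m ∈ C, k < m ∧ m < N + 1 := by
    intro m hm
    simp only [hC, hS, Finset.mem_filter, Finset.mem_Ico] at hm
    omega
  -- Region A : dmaj m k ≤ 1/m + 2/(k-2m)
  have hAbound : ∑ m ∈ A, dmaj m k ≤ 3 * H := by
    have hterm : ∀ m ∈ A, dmaj m k ≤ ((m:ℝ))⁻¹ + 2 * (((k - 2*m : ℕ) : ℝ))⁻¹ := by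
      intro m hm
      obtain ⟨hm1, hm2⟩ := memA m hm
      unfold dmaj
      rw [if_neg (by omega)]
      have habs : |2 * (m:ℝ) - k| = ((k - 2*m : ℕ) : ℝ) := by
        have h1 : ((k - 2*m : ℕ) : ℝ) = (k:ℝ) - 2*m := by
          push_cast [Nat.cast_sub (by omega : 2*m ≤ k)]; ring
        rw [h1, abs_of_nonpos (by
          have : (2*m:ℝ) ≤ k := by exact_mod_cast (by omega : 2*m ≤ k)
          linarith)]
        ring
      rw [habs]
      have hj : (1:ℝ) ≤ ((k - 2*m : ℕ) : ℝ) := by exact_mod_cast (by omega : 1 ≤ k - 2*m)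
      have hm' : (1:ℝ) ≤ (m:ℝ) := by exact_mod_cast hm1
      have hkeq : (k:ℝ) = ((k - 2*m : ℕ) : ℝ) + 2*m := by
        push_cast [Nat.cast_sub (by omega : 2*m ≤ k)]; ring
      rw [hkeq]
      have hm0 : (m:ℝ) ≠ 0 := by positivity
      have hj0 : ((k - 2*m : ℕ) : ℝ) ≠ 0 := by linarith
      rw [show (((k - 2*m : ℕ) : ℝ) + 2*m) / ((m:ℝ) * ((k - 2*m : ℕ) : ℝ))
          = ((m:ℝ))⁻¹ + 2 * (((k - 2*m : ℕ) : ℝ))⁻¹ by field_simp <;> ring]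
    refine (Finset.sum_le_sum hterm).trans ?_
    rw [Finset.sum_add_distrib]
    have h1 : ∑ m ∈ A, ((m:ℝ))⁻¹ ≤ H := by
      apply sum_inv_le k A id (fun x _ y _ h => h)
      intro m hm
      obtain ⟨hm1, hm2⟩ := memA m hm
      simp only [Finset.mem_Icc, id]
      omega
    have h2 : ∑ m ∈ A, 2 * (((k - 2*m : ℕ) : ℝ))⁻¹ ≤ 2 * H := by
      rw [← Finset.mul_sum]
      have := sum_inv_le k A (fun m => k - 2*m)
        (fun x hx y hy h => by
          obtain ⟨hx1, hx2⟩ := memA x hx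
          obtain ⟨hy1, hy2⟩ := memA y hy
          have h' : k - 2*x = k - 2*y := h
          omega)
        (fun m hm => by
          obtain ⟨hm1, hm2⟩ := memA m hm
          simp only [Finset.mem_Icc]
          omega)
      linarith
    linarith
  -- Region Beq : all terms are 0
  have hBeqbound : ∑ m ∈ Beq, dmaj m k = 0 := by
    apply Finset.sum_eq_zero
    intro m hm
    simp only [hBeq, Finset.mem_filter] at hm
    unfold dmaj
    rw [if_pos hm.2]
  -- Region B1 : dmaj m k ≤ 2/(2m-k)
  have hB1bound : ∑ m ∈ B1, dmaj m k ≤ 2 * H := by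
    have hterm : ∀ m ∈ B1, dmaj m k ≤ 2 * (((2*m - k : ℕ) : ℝ))⁻¹ := by
      intro m hm
      obtain ⟨hm1, hm2, hm3⟩ := memB1 m hm
      unfold dmaj
      rw [if_neg (by omega)]
      have habs : |2 * (m:ℝ) - k| = ((2*m - k : ℕ) : ℝ) := by
        have h1 : ((2*m - k : ℕ) : ℝ) = 2*(m:ℝ) - k := by
          push_cast [Nat.cast_sub (by omega : k ≤ 2*m)]; ring
        rw [h1, abs_of_nonneg (by
          have : (k:ℝ) ≤ 2*m := by exact_mod_cast (by omega : k ≤ 2*m)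
          linarith)]
      rw [habs]
      have hj : (1:ℝ) ≤ ((2*m - k : ℕ) : ℝ) := by exact_mod_cast (by omega : 1 ≤ 2*m - k)
      have hm' : (1:ℝ) ≤ (m:ℝ) := by exact_mod_cast hm1
      have hk2m : (k:ℝ) ≤ 2*m := by exact_mod_cast (by omega : k ≤ 2*m)
      have h2 : (0:ℝ) < ((2*m - k : ℕ) : ℝ) := by linarith
      rw [div_mul_eq_div_mul_one_div, one_div]
      have hkm2 : (k:ℝ) / (m:ℝ) ≤ 2 := by
        rw [div_le_iff₀ (by linarith)]; linarith
      exact mul_le_mul_of_nonneg_right hkm2 (by positivity)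
    refine (Finset.sum_le_sum hterm).trans ?_
    rw [← Finset.mul_sum]
    have := sum_inv_le k B1 (fun m => 2*m - k)
      (fun x hx y hy h => by
        obtain ⟨hx1, hx2, hx3⟩ := memB1 x hx
        obtain ⟨hy1, hy2, hy3⟩ := memB1 y hy
        have h' : 2*x - k = 2*y - k := h
        omega)
      (fun m hm => by
        obtain ⟨hm1, hm2, hm3⟩ := memB1 m hm
        simp only [Finset.mem_Icc]
        omega)
    linarith
  -- Region C : dmaj m k ≤ k/m², telescoping
  have hCbound : ∑ m ∈ C, dmaj m k ≤ 1 := by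
    have hterm : ∀ m ∈ C, dmaj m k ≤ (k:ℝ) / ((m:ℝ))^2 := by
      intro m hm
      obtain ⟨hm1, _⟩ := memC m hm
      unfold dmaj
      rw [if_neg (by omega)]
      have hkm : (k:ℝ) < m := by exact_mod_cast hm1
      have hk' : (1:ℝ) ≤ k := by exact_mod_cast hk
      have habs : |2 * (m:ℝ) - k| = 2*(m:ℝ) - k := abs_of_nonneg (by linarith)
      rw [habs]
      have hm0 : (0:ℝ) < m := by linarith
      have hden : (0:ℝ) < (m:ℝ) * (2 * (m:ℝ) - k) := by nlinarith
      rw [div_le_div_iff₀ hden (pow_pos hm0 2)]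
      nlinarith [mul_nonneg (mul_nonneg (show (0:ℝ) ≤ k by linarith)
        (le_of_lt hm0)) (show (0:ℝ) ≤ (m:ℝ) - k by linarith)]
    refine (Finset.sum_le_sum hterm).trans ?_
    have hsub : C ⊆ Finset.Ico (k+1) (N+1) := by
      intro m hm
      obtain ⟨h1, h2⟩ := memC m hm
      simp only [Finset.mem_Ico]
      omega
    have hmono : ∑ m ∈ C, (k:ℝ) / ((m:ℝ))^2 ≤ ∑ m ∈ Finset.Ico (k+1) (N+1), (k:ℝ) / ((m:ℝ))^2 :=
      Finset.sum_le_sum_of_subset_of_nonneg hsub (fun m _ _ => by positivity)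
    refine hmono.trans ?_
    rw [Finset.sum_Ico_eq_sum_range]
    set M := N + 1 - (k + 1) with hM
    set f : ℕ → ℝ := fun i => (k:ℝ) / ((k:ℝ) + i) with hf
    have hterm2 : ∀ i ∈ Finset.range M, (k:ℝ) / ((↑(k + 1 + i)):ℝ)^2 ≤ f i - f (i+1) := by
      intro i _
      have hk' : (1:ℝ) ≤ k := by exact_mod_cast hk
      have h1 : (0:ℝ) < (k:ℝ) + i := by positivity
      have h2 : (0:ℝ) < (k:ℝ) + (i+1) := by positivity
      have heq : f i - f (i+1) = (k:ℝ) / (((k:ℝ) + i) * ((k:ℝ) + (i+1))) := by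
        simp only [hf]
        push_cast
        field_simp
        ring
      rw [heq]
      have hc : ((↑(k + 1 + i)):ℝ) = (k:ℝ) + 1 + i := by push_cast; ring
      rw [hc]
      rw [div_le_div_iff₀ (by positivity) (by positivity)]
      nlinarith
    refine (Finset.sum_le_sum hterm2).trans ?_
    rw [Finset.sum_range_sub' f M]
    have hfM : 0 ≤ f M := by
      simp only [hf]
      positivity
    have hf0 : f 0 = 1 := by
      simp only [hf]
      rw [Nat.cast_zero, add_zero, div_self (by positivity)]
    rw [hf0]
    linarith
  have hHnn : 0 ≤ H := by
    rw [hH]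
    exact_mod_cast le_of_lt (harmonic_pos (by omega : k ≠ 0))
  linarith

lemma dmaj_summable (k : ℕ) : Summable (fun n : ℕ => dmaj (n+1) k) :=
  summable_of_sum_range_le (fun n => dmaj_nonneg _ _) (sum_dmaj_le k)

lemma dmaj_tsum_le (k : ℕ) : ∑' n : ℕ, dmaj (n+1) k ≤ 6 * (1 + Real.log k) :=
  Real.tsum_le_of_sum_range_le (fun n => dmaj_nonneg _ _) (sum_dmaj_le k)

end XiAux

set_option maxHeartbeats 1000000 in
open XiAux in
/-- **Absolute summability of `ξ_n` under the Kolmogorov–Seliverstov–Plessner condition**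
(Proposition 3.10): if `∑ |a_k|² < ∞` and `∑ |a_k|² log k < ∞`, then `∑_n |ξ_n| < ∞`. -/
theorem xi_summable_of_KSP
    (a : ℕ → ℂ)
    (ha : Summable (fun k : ℕ => ‖a k‖ ^ 2))
    (hKSP : Summable (fun k : ℕ => ‖a k‖ ^ 2 * Real.log k)) :
    Summable (fun n : ℕ => ‖xiSeq a (n + 1)‖) := by
  -- summability of the double-indexed majorant, in the (k, n) order
  have hGnn : (0 : ℕ × ℕ → ℝ) ≤ fun q : ℕ × ℕ => ‖a q.1‖ ^ 2 * dmaj (q.2 + 1) q.1 :=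
    fun q => mul_nonneg (sq_nonneg _) (dmaj_nonneg _ _)
  have hG : Summable (fun q : ℕ × ℕ => ‖a q.1‖ ^ 2 * dmaj (q.2 + 1) q.1) := by
    refine (summable_prod_of_nonneg hGnn).mpr ⟨fun k => ?_, ?_⟩
    · show Summable fun n : ℕ => ‖a k‖ ^ 2 * dmaj (n + 1) k
      exact (dmaj_summable k).mul_left _
    · show Summable fun k : ℕ => ∑' n : ℕ, ‖a k‖ ^ 2 * dmaj (n + 1) k
      have hmaj : Summable (fun k : ℕ => 6 * ‖a k‖ ^ 2 + 6 * (‖a k‖ ^ 2 * Real.log k)) :=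
        (ha.mul_left 6).add (hKSP.mul_left 6)
      apply Summable.of_nonneg_of_le _ _ hmaj
      · intro k
        exact tsum_nonneg fun n => mul_nonneg (sq_nonneg _) (dmaj_nonneg _ _)
      · intro k
        rw [tsum_mul_left]
        calc ‖a k‖ ^ 2 * ∑' n : ℕ, dmaj (n+1) k
            ≤ ‖a k‖ ^ 2 * (6 * (1 + Real.log k)) :=
              mul_le_mul_of_nonneg_left (dmaj_tsum_le k) (sq_nonneg _)
          _ = 6 * ‖a k‖ ^ 2 + 6 * (‖a k‖ ^ 2 * Real.log k) := by ring
  -- swap the coordinates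
  have hFsum : Summable (fun p : ℕ × ℕ => ‖a p.2‖ ^ 2 * dmaj (p.1 + 1) p.2) :=
    ((Equiv.prodComm ℕ ℕ).summable_iff).mp hG
  have hFnn : (0 : ℕ × ℕ → ℝ) ≤ fun p : ℕ × ℕ => ‖a p.2‖ ^ 2 * dmaj (p.1 + 1) p.2 :=
    fun p => mul_nonneg (sq_nonneg _) (dmaj_nonneg _ _)
  have hkey := (summable_prod_of_nonneg hFnn).mp hFsum
  have hkey1 : ∀ n : ℕ, Summable (fun k : ℕ => ‖a k‖ ^ 2 * dmaj (n + 1) k) := hkey.1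
  have hkey2 : Summable (fun n : ℕ => ∑' k : ℕ, ‖a k‖ ^ 2 * dmaj (n + 1) k) := hkey.2
  apply Summable.of_nonneg_of_le (fun n => norm_nonneg _) _ hkey2
  intro n
  -- pointwise bound ‖xiSeq a (n+1)‖ ≤ ∑' k, ‖a k‖² dmaj (n+1) k
  have hnormsum : Summable (fun k : ℕ => ‖xiTerm a (n+1) k‖) := by
    apply Summable.of_nonneg_of_le (fun k => norm_nonneg _) _ (ha.mul_left 4)
    intro k
    calc ‖xiTerm a (n+1) k‖ ≤ ‖a k‖ ^ 2 * dmaj (n+1) k :=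
          norm_xiTerm_le a (n+1) k (by omega)
      _ ≤ ‖a k‖ ^ 2 * 4 :=
          mul_le_mul_of_nonneg_left (dmaj_le_four (n+1) k (by omega)) (sq_nonneg _)
      _ = 4 * ‖a k‖ ^ 2 := by ring
  calc ‖xiSeq a (n+1)‖ ≤ ∑' k : ℕ, ‖xiTerm a (n+1) k‖ := norm_tsum_le_tsum_norm hnormsum
    _ ≤ ∑' k : ℕ, ‖a k‖ ^ 2 * dmaj (n+1) k := by
        apply Summable.tsum_le_tsum _ hnormsum (hkey1 n)
        intro k
        exact norm_xiTerm_le a (n+1) k (by omega)
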